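/- Let δ ∈ (2/3, 1) and let μᵢ be the inverse recurrence μ₀ ∈ (0,1/3], μᵢ = h(μᵢ₋₁), where h is the inverse of g(x) = (x+x²)/(1+x²). If an integer n satisfies n ≥ 1/(1-δ) + 2 ln(1/(1-δ)), then μₙ < 1 - δ. -/

import Mathlib

/-! Since `h` inverts `g x = (x + x²)/(1 + x²)`, one step of the recurrence raises `1/μ` by at least
`1 - 2μ`. The potential `Φ x = x + 2 log x - 14/x` absorbs this loss: `Φ (1/μ)` grows by at least `1`
per step while `μ ≤ 1/3`, so `Φ (1/μₙ) ≥ n + Φ 3 > n`. With `ε = 1 - δ`, the hypothesis on `n` gives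
`n ≥ 1/ε + 2 log (1/ε) > Φ (1/ε)`, and `Φ` is strictly increasing, so `1/μₙ > 1/ε`. -/

noncomputable def h (y : ℝ) : ℝ := (-1 + Real.sqrt (1 + 4*y*(1-y))) / (2*(1-y))

noncomputable def museq (μ₀ : ℝ) : ℕ → ℝ
  | 0 => μ₀
  | i + 1 => h (museq μ₀ i)

open Real Set

section InverseMap

variable {y : ℝ}

lemma one_lt_sqrt_one_add_four_mul (hy0 : 0 < y) (hy1 : y < 1) : 1 < √(1 + 4*y*(1-y)) :=
  lt_sqrt_of_sq_lt (by nlinarith)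

lemma h_pos (hy0 : 0 < y) (hy1 : y < 1) : 0 < h y :=
  div_pos (by linarith [one_lt_sqrt_one_add_four_mul hy0 hy1]) (by linarith)

lemma h_lt_self (hy0 : 0 < y) (hy1 : y < 1) : h y < y := by
  have hs := one_lt_sqrt_one_add_four_mul hy0 hy1
  have hs2 : √(1 + 4*y*(1-y)) ^ 2 = 1 + 4*y*(1-y) := sq_sqrt (by nlinarith)
  rw [h, div_lt_iff₀ (by linarith)]
  nlinarith [sq_nonneg (√(1 + 4*y*(1-y)) - (1 + 2*y - 2*y^2)), mul_pos hy0 (sub_pos.mpr hy1)]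

lemma mul_one_add_sq_h (hy0 : 0 < y) (hy1 : y < 1) : y * (1 + h y ^ 2) = h y + h y ^ 2 := by
  have hs2 : √(1 + 4*y*(1-y)) ^ 2 = 1 + 4*y*(1-y) := sq_sqrt (by nlinarith)
  have hne : 1 - y ≠ 0 := (sub_pos.mpr hy1).ne'
  rw [h]
  set s := √(1 + 4*y*(1-y))
  field_simp
  linear_combination (y - 1) * hs2

lemma one_div_add_one_sub_le_one_div_h (hy0 : 0 < y) (hy1 : y < 1) :
    1/y + 1 - 2*y ≤ 1 / h y := by
  have hx0 := h_pos hy0 hy1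
  have hxy := h_lt_self hy0 hy1
  have hq := mul_one_add_sq_h hy0 hy1
  set x := h y
  have hgap : 1/x - 1/y = (1-x)/(1+x) := by
    rw [div_sub_div _ _ hx0.ne' hy0.ne', div_eq_div_iff (by positivity) (by positivity)]
    linear_combination hq
  have hlow : 1 - 2*x ≤ (1-x)/(1+x) := by
    rw [le_div_iff₀ (by linarith)]
    nlinarith
  linarith

end InverseMap

lemma museq_mem_Ioc {μ₀ : ℝ} (h0 : 0 < μ₀) (h1 : μ₀ ≤ 1/3) (n : ℕ) :
    museq μ₀ n ∈ Ioc 0 (1/3) := by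
  induction n with
  | zero => exact ⟨h0, h1⟩
  | succ k ih =>
    have hk1 : museq μ₀ k < 1 := by linarith [ih.2]
    exact ⟨h_pos ih.1 hk1, (h_lt_self ih.1 hk1).le.trans ih.2⟩

noncomputable def potential (x : ℝ) : ℝ := x + 2 * log x - 14 / x

lemma potential_lt {x : ℝ} (hx : 0 < x) : potential x < x + 2 * log x := by
  have : 0 < 14 / x := by positivity
  simp only [potential]
  linarith

lemma strictMonoOn_potential : StrictMonoOn potential (Ioi 0) := by
  intro p hp q _ hpq
  have hlog : log p < log q := log_lt_log hp hpq
  have hdiv : 14 / q < 14 / p := div_lt_div_of_pos_left (by norm_num) hp hpq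
  simp only [potential]
  linarith

/-- The constant `14` in `potential` is the least integer for which this holds at `y = 1/3`. -/
lemma potential_one_div_add_one_le {y : ℝ} (hy0 : 0 < y) (hy1 : y ≤ 1/3) :
    potential (1/y) + 1 ≤ potential (1/y + 1 - 2*y) := by
  have h1 : 0 < 1 - y := by linarith
  have h2 : 0 < 1 + 2*y := by linarith
  set f := 1/y + 1 - 2*y with hf
  have hf' : f = (1 - y) * (1 + 2*y) / y := by rw [hf]; field_simp; ring
  have hf0 : 0 < f := by rw [hf']; positivity
  have hlog : log (1/y) - log f ≤ (1/y)/f - 1 := by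
    rw [← log_div (by positivity) hf0.ne']
    exact log_le_sub_one_of_pos (by positivity)
  have hgain : f + 2 - (1/y + 1 - 14*y + 2*((1/y)/f) + 14/f)
      = 8*y^2*(1 - 3*y) / ((1 - y) * (1 + 2*y)) := by
    rw [hf']; field_simp; ring
  have hnonneg : 0 ≤ 8*y^2*(1 - 3*y) / ((1 - y) * (1 + 2*y)) :=
    div_nonneg (by nlinarith) (by positivity)
  have h14 : 14 / (1/y) = 14*y := by field_simp
  simp only [potential, h14]
  linarith

lemma potential_add_one_le_potential_one_div_h {y : ℝ} (hy0 : 0 < y) (hy1 : y ≤ 1/3) :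
    potential (1/y) + 1 ≤ potential (1 / h y) := by
  have hpos : 0 < 1/y + 1 - 2*y := by
    have : 3 ≤ 1/y := by rw [le_div_iff₀ hy0]; linarith
    linarith
  calc potential (1/y) + 1 ≤ potential (1/y + 1 - 2*y) := potential_one_div_add_one_le hy0 hy1
    _ ≤ potential (1 / h y) :=
      strictMonoOn_potential.monotoneOn hpos (one_div_pos.2 (h_pos hy0 (by linarith)))
        (one_div_add_one_sub_le_one_div_h hy0 (by linarith))

lemma nat_add_potential_three_le {μ₀ : ℝ} (h0 : 0 < μ₀) (h1 : μ₀ ≤ 1/3) (n : ℕ) :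
    n + potential 3 ≤ potential (1 / museq μ₀ n) := by
  induction n with
  | zero =>
    have h3 : 3 ≤ 1/μ₀ := by rw [le_div_iff₀ h0]; linarith
    simp only [Nat.cast_zero, zero_add, museq]
    exact strictMonoOn_potential.monotoneOn (by norm_num) (mem_Ioi.2 (by linarith)) h3
  | succ k ih =>
    have hk := museq_mem_Ioc h0 h1 k
    have hstep := potential_add_one_le_potential_one_div_h hk.1 hk.2
    rw [museq]
    push_cast
    linarith

lemma potential_three_pos : 0 < potential 3 := by
  have hlog3 : 1 < log 3 := by
    rw [lt_log_iff_exp_lt (by norm_num)]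
    linarith [exp_one_lt_d9]
  simp only [potential]
  linarith

theorem stmt_14_general (δ μ₀ : ℝ) (hδ1 : δ < 1)
    (h0 : 0 < μ₀) (h1 : μ₀ ≤ 1/3) (n : ℕ)
    (hn : (n : ℝ) ≥ 1/(1-δ) + 2 * Real.log (1/(1-δ))) :
    museq μ₀ n < 1 - δ := by
  have hε : 0 < 1 - δ := by linarith
  have hμ := (museq_mem_Ioc h0 h1 n).1
  have hlt : potential (1/(1-δ)) < potential (1 / museq μ₀ n) :=
    calc potential (1/(1-δ)) < 1/(1-δ) + 2 * log (1/(1-δ)) := potential_lt (by positivity)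
      _ ≤ n := hn
      _ < n + potential 3 := lt_add_of_pos_right _ potential_three_pos
      _ ≤ potential (1 / museq μ₀ n) := nat_add_potential_three_le h0 h1 n
  have hinv := (strictMonoOn_potential.lt_iff_lt (one_div_pos.2 hε) (one_div_pos.2 hμ)).1 hlt
  exact (one_div_lt_one_div hε hμ).1 hinv

theorem stmt_14 (δ μ₀ : ℝ) (hδ0 : 2/3 < δ) (hδ1 : δ < 1)
    (h0 : 0 < μ₀) (h1 : μ₀ ≤ 1/3) (n : ℕ)
    (hn : (n : ℝ) ≥ 1/(1-δ) + 2 * Real.log (1/(1-δ))) :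
    museq μ₀ n < 1 - δ :=
  stmt_14_general δ μ₀ hδ1 h0 h1 n hn
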